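/- Let X₁, X₂, … be i.i.d. square-integrable real random variables, τ ∈ (0,1), and let μ̂_{τ,N} denote the unique minimizer over m of (1/N)·Σ_{i=1}^N R_τ(X_i − m). Then μ̂_{τ,N} converges almost surely as N → ∞ to the τ-expectile μ_τ, the unique minimizer of E[R_τ(X₁ − m)]. -/

import Mathlib

/-!
The score `ψ_τ(x, m)`, the derivative of `m ↦ R_τ(x - m)`, is increasing in `m` with slope at
least `2 min(τ, 1 - τ)`. So the population score `H(m) = E ψ_τ(X₁, m)` is strictly increasing,
and the first-order conditions give `H(μ_τ) = 0` and `Σᵢ ψ_τ(Xᵢ, μ̂_{τ,N}) = 0`. For each `k`,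
the strong law at the two points `μ_τ ± 1/(k+1)` makes the increasing empirical score negative
at the left point and positive at the right one for large `N`, which traps `μ̂_{τ,N}` between
them.
-/

open MeasureTheory Filter

noncomputable def Rloss (τ u : ℝ) : ℝ :=
  τ * (max u 0) ^ 2 + (1 - τ) * (max (-u) 0) ^ 2

open Finset ProbabilityTheory

-- The paper's `ψ_τ(x, m)`, with positive parts in place of indicators.
noncomputable def expectileScore (τ x m : ℝ) : ℝ :=
  2 * (1 - τ) * max (m - x) 0 - 2 * τ * max (x - m) 0

lemma hasDerivAt_sq_max_zero (u : ℝ) :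
    HasDerivAt (fun v : ℝ => max v 0 ^ 2) (2 * max u 0) u := by
  refine hasDerivAt_of_hasDerivAt_of_ne' (f := fun v : ℝ => max v 0 ^ 2)
    (g := fun v => 2 * max v 0) (x := 0) (fun v hv => ?_) (by fun_prop) (by fun_prop) u
  rcases hv.lt_or_gt with hv | hv
  · have hzero : (fun v : ℝ => max v 0 ^ 2) =ᶠ[nhds v] fun _ => 0 := by
      filter_upwards [Iio_mem_nhds hv] with w hw
      simp [max_eq_right (Set.mem_Iio.mp hw).le]
    simpa [max_eq_right hv.le] using (hasDerivAt_const v (0 : ℝ)).congr_of_eventuallyEq hzero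
  · have hsq : (fun v : ℝ => max v 0 ^ 2) =ᶠ[nhds v] fun w => w ^ 2 := by
      filter_upwards [Ioi_mem_nhds hv] with w hw
      simp [max_eq_left (Set.mem_Ioi.mp hw).le]
    simpa [max_eq_left hv.le] using (hasDerivAt_pow 2 v).congr_of_eventuallyEq hsq

lemma hasDerivAt_Rloss_sub (τ x m : ℝ) :
    HasDerivAt (fun m => Rloss τ (x - m)) (expectileScore τ x m) m := by
  have hinner := (hasDerivAt_id m).const_sub x
  have hpos := (hasDerivAt_sq_max_zero (x - m)).comp m hinner
  have hneg := (hasDerivAt_sq_max_zero (-(x - m))).comp m hinner.neg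
  refine ((hpos.const_mul τ).add (hneg.const_mul (1 - τ))).congr_deriv ?_
  simp only [expectileScore, neg_sub]
  ring

lemma Rloss_nonneg {τ : ℝ} (hτ₀ : 0 ≤ τ) (hτ₁ : τ ≤ 1) (u : ℝ) : 0 ≤ Rloss τ u := by
  unfold Rloss
  have := sub_nonneg.2 hτ₁
  positivity

lemma Rloss_le_sq {τ : ℝ} (hτ₀ : 0 ≤ τ) (hτ₁ : τ ≤ 1) (u : ℝ) : Rloss τ u ≤ u ^ 2 := by
  unfold Rloss
  rcases le_total u 0 with h | h
  · rw [max_eq_right h, max_eq_left (neg_nonneg.mpr h)]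
    nlinarith [sq_nonneg u]
  · rw [max_eq_left h, max_eq_right (neg_nonpos.mpr h)]
    nlinarith [sq_nonneg u]

@[fun_prop]
lemma continuous_Rloss (τ : ℝ) : Continuous (Rloss τ) := by
  unfold Rloss; fun_prop

@[fun_prop]
lemma continuous_expectileScore (τ m : ℝ) : Continuous fun x => expectileScore τ x m := by
  unfold expectileScore; fun_prop

lemma abs_expectileScore_le {τ : ℝ} (hτ₀ : 0 ≤ τ) (hτ₁ : τ ≤ 1) (x m : ℝ) :
    |expectileScore τ x m| ≤ 2 * (|x| + |m|) := by
  unfold expectileScore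
  have hle₁ : max (m - x) 0 ≤ |x| + |m| :=
    max_le (by linarith [le_abs_self m, neg_le_abs x]) (by positivity)
  have hle₂ : max (x - m) 0 ≤ |x| + |m| :=
    max_le (by linarith [le_abs_self x, neg_le_abs m]) (by positivity)
  have hnn₁ : (0 : ℝ) ≤ max (m - x) 0 := le_max_right _ _
  have hnn₂ : (0 : ℝ) ≤ max (x - m) 0 := le_max_right _ _
  rw [abs_le]
  constructor
  · nlinarith [mul_le_mul_of_nonneg_left hle₂ hτ₀, mul_nonneg (sub_nonneg.2 hτ₁) hnn₁]
  · nlinarith [mul_le_mul_of_nonneg_left hle₁ (sub_nonneg.2 hτ₁), mul_nonneg hτ₀ hnn₂]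

lemma mul_sub_le_expectileScore_sub (τ x : ℝ) {m m' : ℝ} (h : m ≤ m') :
    2 * min τ (1 - τ) * (m' - m) ≤ expectileScore τ x m' - expectileScore τ x m := by
  unfold expectileScore
  have e₁ := max_zero_sub_max_neg_zero_eq_self (m - x)
  have e₂ := max_zero_sub_max_neg_zero_eq_self (m' - x)
  rw [neg_sub] at e₁ e₂
  have hP : max (m - x) 0 ≤ max (m' - x) 0 := max_le_max (by linarith) le_rfl
  have hQ : max (x - m') 0 ≤ max (x - m) 0 := max_le_max (by linarith) le_rfl
  rcases le_total τ (1 - τ) with hc | hc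
  · rw [min_eq_left hc]
    nlinarith [mul_le_mul_of_nonneg_left hP (by linarith : (0:ℝ) ≤ 1 - τ - τ)]
  · rw [min_eq_right hc]
    nlinarith [mul_le_mul_of_nonneg_left hQ (by linarith : (0:ℝ) ≤ τ - (1 - τ))]

lemma monotone_expectileScore {τ : ℝ} (hτ₀ : 0 ≤ τ) (hτ₁ : τ ≤ 1) (x : ℝ) :
    Monotone (expectileScore τ x) := fun m m' h => by
  have := mul_sub_le_expectileScore_sub τ x h
  have : 0 ≤ 2 * min τ (1 - τ) * (m' - m) := by
    have := le_min hτ₀ (sub_nonneg.2 hτ₁)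
    have := sub_nonneg.2 h
    positivity
  linarith

section Population

variable {Ω : Type*} [MeasurableSpace Ω] {μ : Measure Ω} [IsFiniteMeasure μ] {Y : Ω → ℝ}

lemma integrable_expectileScore {τ : ℝ} (hτ₀ : 0 ≤ τ) (hτ₁ : τ ≤ 1) (hY : Integrable Y μ)
    (m : ℝ) : Integrable (fun ω => expectileScore τ (Y ω) m) μ := by
  refine Integrable.mono' ((hY.abs.add (integrable_const |m|)).const_mul 2)
    ((continuous_expectileScore τ m).comp_aestronglyMeasurable hY.1) ?_
  filter_upwards with ω
  exact abs_expectileScore_le hτ₀ hτ₁ _ _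

lemma integrable_Rloss_sub {τ : ℝ} (hτ₀ : 0 ≤ τ) (hτ₁ : τ ≤ 1) (hY : MemLp Y 2 μ) (m : ℝ) :
    Integrable (fun ω => Rloss τ (Y ω - m)) μ := by
  have hsq : Integrable (fun ω => (Y ω - m) ^ 2) μ := (hY.sub (memLp_const m)).integrable_sq
  refine Integrable.mono' hsq
    ((continuous_Rloss τ).comp_aestronglyMeasurable (hY.1.sub aestronglyMeasurable_const)) ?_
  filter_upwards with ω
  rw [Real.norm_eq_abs, abs_of_nonneg (Rloss_nonneg hτ₀ hτ₁ _)]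
  exact Rloss_le_sq hτ₀ hτ₁ _

lemma hasDerivAt_integral_Rloss_sub {τ : ℝ} (hτ₀ : 0 ≤ τ) (hτ₁ : τ ≤ 1) (hY : MemLp Y 2 μ)
    (m₀ : ℝ) :
    HasDerivAt (fun m => ∫ ω, Rloss τ (Y ω - m) ∂μ) (∫ ω, expectileScore τ (Y ω) m₀ ∂μ) m₀ := by
  have hY₁ : Integrable Y μ := hY.integrable one_le_two
  refine (hasDerivAt_integral_of_dominated_loc_of_deriv_le (Metric.ball_mem_nhds m₀ one_pos)
    (Eventually.of_forall fun m => (integrable_Rloss_sub hτ₀ hτ₁ hY m).1)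
    (integrable_Rloss_sub hτ₀ hτ₁ hY m₀) (integrable_expectileScore hτ₀ hτ₁ hY₁ m₀).1
    (bound := fun ω => 2 * (|Y ω| + (|m₀| + 1))) ?_
    ((hY₁.abs.add (integrable_const _)).const_mul 2)
    (Eventually.of_forall fun ω m _ => hasDerivAt_Rloss_sub τ (Y ω) m)).2
  filter_upwards with ω m hm
  have hm' : |m| ≤ |m₀| + 1 := by
    have := abs_sub_abs_le_abs_sub m m₀
    rw [Metric.mem_ball, Real.dist_eq] at hm
    linarith
  rw [Real.norm_eq_abs]
  linarith [abs_expectileScore_le hτ₀ hτ₁ (Y ω) m]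

lemma integral_expectileScore_eq_zero_of_forall_le {τ : ℝ} (hτ₀ : 0 ≤ τ) (hτ₁ : τ ≤ 1)
    (hY : MemLp Y 2 μ) {a : ℝ}
    (hmin : ∀ m, ∫ ω, Rloss τ (Y ω - a) ∂μ ≤ ∫ ω, Rloss τ (Y ω - m) ∂μ) :
    ∫ ω, expectileScore τ (Y ω) a ∂μ = 0 :=
  IsLocalMin.hasDerivAt_eq_zero (Eventually.of_forall hmin)
    (hasDerivAt_integral_Rloss_sub hτ₀ hτ₁ hY a)

lemma strictMono_integral_expectileScore {τ : ℝ} (hτ : τ ∈ Set.Ioo 0 1) [NeZero μ]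
    (hY : Integrable Y μ) :
    StrictMono fun m => ∫ ω, expectileScore τ (Y ω) m ∂μ := by
  obtain ⟨hτ₀, hτ₁⟩ := hτ
  intro m m' h
  have hc : 0 < 2 * min τ (1 - τ) * (m' - m) := by
    have := lt_min hτ₀ (sub_pos.2 hτ₁)
    have := sub_pos.2 h
    positivity
  have hint := integrable_expectileScore hτ₀.le hτ₁.le hY
  have hgap : ∫ ω, 2 * min τ (1 - τ) * (m' - m) ∂μ
      ≤ ∫ ω, expectileScore τ (Y ω) m' ∂μ - ∫ ω, expectileScore τ (Y ω) m ∂μ := by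
    rw [← integral_sub (hint m') (hint m)]
    exact integral_mono (integrable_const _) ((hint m').sub (hint m))
      fun ω => mul_sub_le_expectileScore_sub τ (Y ω) h.le
  have : 0 < ∫ ω, 2 * min τ (1 - τ) * (m' - m) ∂μ := by
    rw [integral_const, smul_eq_mul]
    exact mul_pos (measureReal_univ_pos) hc
  simp only
  linarith

end Population

lemma sum_expectileScore_eq_zero_of_forall_le {ι : Type*} (s : Finset ι) (τ c : ℝ) (x : ι → ℝ)
    {a : ℝ} (hmin : ∀ m, c * ∑ i ∈ s, Rloss τ (x i - a) ≤ c * ∑ i ∈ s, Rloss τ (x i - m)) :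
    c * ∑ i ∈ s, expectileScore τ (x i) a = 0 :=
  IsLocalMin.hasDerivAt_eq_zero (Eventually.of_forall hmin)
    ((HasDerivAt.fun_sum fun i _ => hasDerivAt_Rloss_sub τ (x i) a).const_mul c)

lemma strong_law_ae_real_comp {Ω : Type*} [MeasurableSpace Ω] {μ : Measure Ω}
    {X : ℕ → Ω → ℝ} (hindep : iIndepFun X μ) (hident : ∀ i, IdentDistrib (X i) (X 0) μ μ)
    {g : ℝ → ℝ} (hg : Measurable g) (hint : Integrable (fun ω => g (X 0 ω)) μ) :
    ∀ᵐ ω ∂μ, Tendsto (fun n : ℕ => (∑ i ∈ range n, g (X i ω)) / n) atTop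
      (nhds (∫ ω, g (X 0 ω) ∂μ)) :=
  strong_law_ae_real (fun i ω => g (X i ω)) hint
    (fun _ _ hij => (hindep.indepFun hij).comp hg hg) (fun i => (hident i).comp hg)

lemma tendsto_of_monotone_of_eq_zero {F : ℕ → ℝ → ℝ} (hmono : ∀ N, Monotone (F N)) {a : ℕ → ℝ}
    (hzero : ∀ N, F N (a N) = 0) {c : ℝ}
    (hneg : ∀ k : ℕ, ∀ᶠ N in atTop, F N (c - 1 / (k + 1)) < 0)
    (hpos : ∀ k : ℕ, ∀ᶠ N in atTop, 0 < F N (c + 1 / (k + 1))) :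
    Tendsto a atTop (nhds c) := by
  rw [Metric.tendsto_atTop]
  intro ε hε
  obtain ⟨k, hk⟩ := exists_nat_one_div_lt hε
  obtain ⟨N₀, hN₀⟩ := eventually_atTop.mp ((hneg k).and (hpos k))
  refine ⟨N₀, fun N hN => ?_⟩
  obtain ⟨hlo, hhi⟩ := hN₀ N hN
  have hlt : c - 1 / (k + 1) < a N :=
    lt_of_not_ge fun h => (hlo.trans_le' ((hzero N).symm.trans_le (hmono N h))).false
  have hgt : a N < c + 1 / (k + 1) :=
    lt_of_not_ge fun h => (hhi.trans_le ((hmono N h).trans_eq (hzero N))).false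
  rw [Real.dist_eq, abs_sub_lt_iff]
  constructor <;> linarith

theorem stmt9_general {Ω : Type*} [MeasurableSpace Ω] (μ : Measure Ω) [IsProbabilityMeasure μ]
    (X : ℕ → Ω → ℝ)
    (hindep : ProbabilityTheory.iIndepFun X μ)
    (hident : ∀ i, ProbabilityTheory.IdentDistrib (X i) (X 0) μ μ)
    (hX2 : Integrable (fun ω => (X 0 ω) ^ 2) μ)
    (τ : ℝ) (hτ : τ ∈ Set.Ioo (0:ℝ) 1)
    (μhat : ℕ → Ω → ℝ)
    (hμhat : ∀ (N : ℕ) (ω : Ω), ∀ m : ℝ,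
      (1 / (N : ℝ)) * ∑ i ∈ Finset.range N, Rloss τ (X i ω - μhat N ω) ≤
        (1 / (N : ℝ)) * ∑ i ∈ Finset.range N, Rloss τ (X i ω - m))
    (μτ : ℝ)
    (hμτ : ∀ m : ℝ, ∫ ω, Rloss τ (X 0 ω - μτ) ∂μ ≤ ∫ ω, Rloss τ (X 0 ω - m) ∂μ) :
    ∀ᵐ ω ∂μ, Tendsto (fun N => μhat N ω) atTop (nhds μτ) := by
  obtain ⟨hτ₀, hτ₁⟩ := hτ
  have hL2 : MemLp (X 0) 2 μ :=
    (memLp_two_iff_integrable_sq (hident 0).aemeasurable_fst.aestronglyMeasurable).2 hX2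
  have hX1 : Integrable (X 0) μ := hL2.integrable one_le_two
  set H := fun m => ∫ ω, expectileScore τ (X 0 ω) m ∂μ
  have hH : StrictMono H := strictMono_integral_expectileScore ⟨hτ₀, hτ₁⟩ hX1
  have hHμτ : H μτ = 0 := integral_expectileScore_eq_zero_of_forall_le hτ₀.le hτ₁.le hL2 hμτ
  have hlln : ∀ m, ∀ᵐ ω ∂μ, Tendsto (fun N : ℕ => (∑ i ∈ range N, expectileScore τ (X i ω) m) / N)
      atTop (nhds (H m)) := fun m =>
    strong_law_ae_real_comp hindep hident (g := (expectileScore τ · m))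
      (continuous_expectileScore τ m).measurable
      (integrable_expectileScore hτ₀.le hτ₁.le hX1 m)
  have hgrid := ae_all_iff.2 fun k : ℕ => (hlln (μτ - 1 / (k + 1))).and (hlln (μτ + 1 / (k + 1)))
  filter_upwards [hgrid] with ω hω
  refine tendsto_of_monotone_of_eq_zero
    (F := fun N m => 1 / (N : ℝ) * ∑ i ∈ range N, expectileScore τ (X i ω) m)
    (fun N m m' h => ?_) (fun N => sum_expectileScore_eq_zero_of_forall_le _ _ _ _ (hμhat N ω))
    (fun k => ?_) (fun k => ?_)
  · exact mul_le_mul_of_nonneg_left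
      (sum_le_sum fun i _ => monotone_expectileScore hτ₀.le hτ₁.le _ h) (by positivity)
  · have hδ : μτ - 1 / (k + 1) < μτ := sub_lt_self _ (by positivity)
    simp only [one_div_mul_eq_div]
    exact (hω k).1.eventually_lt_const (hHμτ ▸ hH hδ)
  · have hδ : μτ < μτ + 1 / (k + 1) := lt_add_of_pos_right _ (by positivity)
    simp only [one_div_mul_eq_div]
    exact (hω k).2.eventually_const_lt (hHμτ ▸ hH hδ)

theorem stmt9 {Ω : Type*} [MeasurableSpace Ω] (μ : Measure Ω) [IsProbabilityMeasure μ]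
    (X : ℕ → Ω → ℝ) (hXmeas : ∀ i, Measurable (X i))
    (hindep : ProbabilityTheory.iIndepFun X μ)
    (hident : ∀ i, ProbabilityTheory.IdentDistrib (X i) (X 0) μ μ)
    (hX2 : Integrable (fun ω => (X 0 ω) ^ 2) μ)
    (τ : ℝ) (hτ : τ ∈ Set.Ioo (0:ℝ) 1)
    (μhat : ℕ → Ω → ℝ)
    (hμhat : ∀ (N : ℕ) (ω : Ω), ∀ m : ℝ,
      (1 / (N : ℝ)) * ∑ i ∈ Finset.range N, Rloss τ (X i ω - μhat N ω) ≤
        (1 / (N : ℝ)) * ∑ i ∈ Finset.range N, Rloss τ (X i ω - m))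
    (μτ : ℝ)
    (hμτ : ∀ m : ℝ, ∫ ω, Rloss τ (X 0 ω - μτ) ∂μ ≤ ∫ ω, Rloss τ (X 0 ω - m) ∂μ) :
    ∀ᵐ ω ∂μ, Tendsto (fun N => μhat N ω) atTop (nhds μτ) :=
  stmt9_general μ X hindep hident hX2 τ hτ μhat hμhat μτ hμτ
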